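/- Let u(x) = (1/2)·x·(3 − x²) and uₙ its n-fold iterate. Then for every x ∈ [−1, 1] and every n ≥ 1, |x·uₙ(x) − |x|| ≤ 2^(−n/2). -/

import Mathlib

/-!
Write `u y = y (3 - y²) / 2`, so that `1 - u y = (1 - y) · g y` with `g y = (1 - y)(y + 2) / 2`.
On `[0, 1]` the map `u` stays in `[0, 1]` and `√2 · y · g y ≤ u y`; hence the ratio
`(1 - uₙ x) / uₙ x` shrinks by a factor `√2` at each step, i.e.
`√2ⁿ · x (1 - uₙ x) ≤ uₙ x ≤ 1`, which is the claim for `x ≥ 0`. Since `u` is odd,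
`x · uₙ x` is even in `x`, which gives the case `x < 0`.
-/

open Set

noncomputable def newtonSchulz (y : ℝ) : ℝ := y * (3 - y ^ 2) / 2

lemma newtonSchulz_neg (y : ℝ) : newtonSchulz (-y) = -newtonSchulz y := by
  unfold newtonSchulz
  ring

lemma newtonSchulz_iterate_neg (n : ℕ) (y : ℝ) :
    newtonSchulz^[n] (-y) = -newtonSchulz^[n] y :=
  (Function.Commute.iterate_left (f := newtonSchulz) (g := Neg.neg) newtonSchulz_neg n) y

lemma one_sub_newtonSchulz (y : ℝ) :
    1 - newtonSchulz y = (1 - y) * ((1 - y) * (y + 2) / 2) := by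
  unfold newtonSchulz
  ring

lemma mapsTo_newtonSchulz_Icc : MapsTo newtonSchulz (Icc 0 1) (Icc 0 1) := by
  rintro y ⟨hy0, hy1⟩
  have h := one_sub_newtonSchulz y
  unfold newtonSchulz at h ⊢
  constructor <;> nlinarith [mul_nonneg (mul_nonneg (sub_nonneg.2 hy1) (sub_nonneg.2 hy1)) hy0]

lemma sqrt_two_mul_le_newtonSchulz {y : ℝ} (hy : 0 ≤ y) :
    √2 * (y * ((1 - y) * (y + 2) / 2)) ≤ newtonSchulz y := by
  have hsq : √2 ^ 2 = 2 := Real.sq_sqrt zero_le_two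
  have h1 : 1 ≤ √2 := Real.one_le_sqrt.2 one_le_two
  have h2 : √2 ≤ 3 / 2 := by nlinarith
  -- `3 - y² - √2 (1 - y)(y + 2) = (3 - 2√2) + √2 y + (√2 - 1) y²`
  have key : √2 * ((1 - y) * (y + 2)) ≤ 3 - y ^ 2 := by
    nlinarith [mul_nonneg (sub_nonneg.2 h1) (sq_nonneg y)]
  unfold newtonSchulz
  nlinarith [mul_le_mul_of_nonneg_left key hy]

lemma sqrt_two_pow_mul_one_sub_newtonSchulz_iterate_le {x : ℝ} (hx : x ∈ Icc (0 : ℝ) 1)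
    (n : ℕ) :
    √2 ^ n * (x * (1 - newtonSchulz^[n] x)) ≤ newtonSchulz^[n] x := by
  induction n with
  | zero => simp only [pow_zero, one_mul, Function.iterate_zero_apply]; nlinarith [hx.1, hx.2]
  | succ n ih =>
    set y := newtonSchulz^[n] x
    obtain ⟨hy0, hy1⟩ : y ∈ Icc 0 1 := mapsTo_newtonSchulz_Icc.iterate n hx
    have hg : 0 ≤ (1 - y) * (y + 2) / 2 := by nlinarith
    rw [Function.iterate_succ_apply']
    calc √2 ^ (n + 1) * (x * (1 - newtonSchulz y))
        = √2 * ((√2 ^ n * (x * (1 - y))) * ((1 - y) * (y + 2) / 2)) := by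
          rw [one_sub_newtonSchulz]; ring
      _ ≤ √2 * (y * ((1 - y) * (y + 2) / 2)) := by gcongr
      _ ≤ newtonSchulz y := sqrt_two_mul_le_newtonSchulz hy0

lemma mul_one_sub_newtonSchulz_iterate_le {x : ℝ} (hx : x ∈ Icc (0 : ℝ) 1) (n : ℕ) :
    x * (1 - newtonSchulz^[n] x) ≤ (√2 ^ n)⁻¹ := by
  have hy1 : newtonSchulz^[n] x ≤ 1 := (mapsTo_newtonSchulz_Icc.iterate n hx).2
  calc x * (1 - newtonSchulz^[n] x)
      = (√2 ^ n)⁻¹ * (√2 ^ n * (x * (1 - newtonSchulz^[n] x))) := by field_simp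
    _ ≤ (√2 ^ n)⁻¹ * newtonSchulz^[n] x := by
        gcongr; exact sqrt_two_pow_mul_one_sub_newtonSchulz_iterate_le hx n
    _ ≤ (√2 ^ n)⁻¹ := mul_le_of_le_one_right (by positivity) hy1

lemma abs_mul_newtonSchulz_iterate_sub_abs_le {x : ℝ} (hx : x ∈ Icc (-1 : ℝ) 1) (n : ℕ) :
    abs (x * newtonSchulz^[n] x - |x|) ≤ (√2 ^ n)⁻¹ := by
  wlog h : 0 ≤ x generalizing x
  · have := this ⟨neg_le_neg hx.2, neg_le.1 hx.1⟩ (by linarith)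
    rwa [newtonSchulz_iterate_neg, neg_mul_neg, abs_neg] at this
  have hy1 : newtonSchulz^[n] x ≤ 1 := (mapsTo_newtonSchulz_Icc.iterate n ⟨h, hx.2⟩).2
  rw [abs_of_nonneg h, abs_sub_comm, abs_of_nonneg (by nlinarith), ← mul_one_sub]
  exact mul_one_sub_newtonSchulz_iterate_le ⟨h, hx.2⟩ n

lemma two_rpow_neg_natCast_div_two (n : ℕ) : (2 : ℝ) ^ (-(n : ℝ) / 2) = (√2 ^ n)⁻¹ := by
  rw [Real.sqrt_eq_rpow, ← Real.rpow_natCast, ← Real.rpow_mul zero_le_two,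
    ← Real.rpow_neg zero_le_two]
  ring_nf

theorem stmt3_general (n : ℕ) (x : ℝ) (hx : x ∈ Set.Icc (-1 : ℝ) 1) :
    abs (x * (fun y : ℝ => y * (3 - y ^ 2) / 2)^[n] x - |x|) ≤
      (2 : ℝ) ^ (-(n : ℝ) / 2) := by
  rw [two_rpow_neg_natCast_div_two]
  exact abs_mul_newtonSchulz_iterate_sub_abs_le hx n

/-- Let u(x) = x(3 − x²)/2 and uₙ its n-fold iterate. For every x ∈ [−1,1] and n ≥ 1:
|x·uₙ(x) − |x|| ≤ 2^(−n/2). -/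
theorem stmt3 (n : ℕ) (hn : 1 ≤ n) (x : ℝ) (hx : x ∈ Set.Icc (-1 : ℝ) 1) :
    abs (x * (fun y : ℝ => y * (3 - y ^ 2) / 2)^[n] x - |x|) ≤
      (2 : ℝ) ^ (-(n : ℝ) / 2) :=
  stmt3_general n x hx
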